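/- arXiv:2604.27160 — 7 statements merged into one kernel-verified Lean document; each statement's English description precedes it below -/
import Mathlib

section
/- Let C > 0 and let γ : 𝒰 → [0,∞) satisfy Σ_{v ∈ 𝒰} C^{2|v|} γ_v < ∞. Define γ↑ by γ↑_u := Σ_{v ∈ 𝒰, u ⊆ v} C^{2|v|} γ_v. Then for all u, v ∈ 𝒰 one has (Δ_v γ↑)_u = Σ_{w ∈ 𝒰, u ⊆ w, w ∩ v = ∅} C^{2|w|} γ_w. In particular γ↑ is completely monotone, and γ↑_u tends to 0 along the net of finite subsets directed by u ≤ v :⇔ max u ≤ max v. -/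
open Finset Filter Topology

/-- The difference operator `Δ_v` on families indexed by finite subsets of `ℕ`:
`(Δ_v γ)_u := Σ_{w ⊆ v} (−1)^{|w|} γ_{u ∪ w}`. -/
noncomputable def Δ (v : Finset ℕ) (γ : Finset ℕ → ℝ) (u : Finset ℕ) : ℝ :=
  ∑ w ∈ v.powerset, (-1 : ℝ) ^ w.card * γ (u ∪ w)

/-! Writing `γ↑_u = Σ_{v ⊇ u} f_v`, each `f_s` enters `(Δ_v γ↑)_u` with total coefficient
`Σ_{w ⊆ v ∩ s} (−1)^{|w|}` when `u ⊆ s`, which is `1` if `s ∩ v = ∅` and `0` otherwise. This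
gives the formula for `Δ_v γ↑`, and complete monotonicity is immediate from it. The decay of
`γ↑_u` holds for any summable `f`: the sum of `f` over sets avoiding a large enough finite family
is small, and all supersets of `u` avoid a finite family once `max u` exceeds the maxima of its
members. -/

section UpperSum

variable {α : Type*} [DecidableEq α]

theorem Finset.sum_powerset_neg_one_pow_card_eq_ite {R : Type*} [Ring R] (x : Finset α) :
    ∑ m ∈ x.powerset, (-1 : R) ^ m.card = if x = ∅ then 1 else 0 := by
  have h := congrArg (Int.cast : ℤ → R) (Finset.sum_powerset_neg_one_pow_card (x := x))
  push_cast at h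
  simpa [apply_ite (Int.cast : ℤ → R)] using h

theorem Finset.sum_powerset_neg_one_pow_card_mul_ite_union_subset {R : Type*} [Ring R]
    (u v s : Finset α) (a : R) :
    ∑ w ∈ v.powerset, (-1 : R) ^ w.card * (if u ∪ w ⊆ s then a else 0) =
      if u ⊆ s ∧ s ∩ v = ∅ then a else 0 := by
  by_cases hus : u ⊆ s
  · have hfilter : v.powerset.filter (· ⊆ s) = (v ∩ s).powerset := by
      ext w
      simp only [mem_filter, mem_powerset, subset_inter_iff]
    simp only [union_subset_iff, hus, true_and, mul_ite, mul_zero]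
    rw [← sum_filter, hfilter, ← sum_mul, sum_powerset_neg_one_pow_card_eq_ite, inter_comm]
    split_ifs <;> simp
  · simp [union_subset_iff, hus]

/-- The paper's `γ↑`, for `f_v = C^{2|v|} γ_v`. -/
noncomputable def upperSum (f : Finset α → ℝ) (u : Finset α) : ℝ :=
  ∑' v, if u ⊆ v then f v else 0

variable {f : Finset α → ℝ}

theorem Summable.ite_subset (hf : Summable f) (u : Finset α) :
    Summable fun v => if u ⊆ v then f v else 0 :=
  (hf.indicator {v | u ⊆ v}).congr fun v => by simp [Set.indicator_apply]

theorem upperSum_eq_tsum_subtype (u : Finset α) :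
    upperSum f u = ∑' v : {v : Finset α | u ⊆ v}, f v := by
  rw [_root_.tsum_subtype, upperSum]
  simp [Set.indicator_apply]

end UpperSum

variable {f : Finset ℕ → ℝ}

theorem Δ_upperSum (hf : Summable f) (u v : Finset ℕ) :
    Δ v (upperSum f) u = ∑' w, if u ⊆ w ∧ w ∩ v = ∅ then f w else 0 := by
  simp only [Δ, upperSum, ← tsum_mul_left]
  rw [← Summable.tsum_finsetSum fun w _ => (hf.ite_subset (u ∪ w)).mul_left _]
  exact tsum_congr fun s => sum_powerset_neg_one_pow_card_mul_ite_union_subset u v s (f s)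

theorem Δ_upperSum_nonneg (hf₀ : ∀ v, 0 ≤ f v) (hf : Summable f) (u v : Finset ℕ) :
    0 ≤ Δ v (upperSum f) u := by
  rw [Δ_upperSum hf]
  exact tsum_nonneg fun w => by split_ifs <;> simp [hf₀]

theorem exists_forall_upperSum_lt (hf : Summable f) {ε : ℝ} (hε : 0 < ε) :
    ∃ r : ℕ, ∀ u : Finset ℕ, r ≤ u.sup id → upperSum f u < ε := by
  obtain ⟨T, hT⟩ := hf.tsum_vanishing (Iio_mem_nhds hε)
  refine ⟨T.sup (·.sup id) + 1, fun u hu => ?_⟩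
  rw [upperSum_eq_tsum_subtype]
  refine hT _ (Set.disjoint_left.mpr fun v (huv : u ⊆ v) hvT => ?_)
  have : v.sup id ≤ T.sup (·.sup id) := le_sup (f := (·.sup id)) hvT
  have : u.sup id ≤ v.sup id := sup_mono huv
  omega

theorem stmt5_general (C : ℝ) (γ : Finset ℕ → ℝ) (hnn : ∀ u, 0 ≤ γ u)
    (hsum : Summable fun v : Finset ℕ => C ^ (2 * v.card) * γ v)
    (γup : Finset ℕ → ℝ)
    (hγup : ∀ u, γup u = ∑' v : Finset ℕ, if u ⊆ v then C ^ (2 * v.card) * γ v else 0) :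
    (∀ u v : Finset ℕ,
      Δ v γup u = ∑' w : Finset ℕ, if u ⊆ w ∧ w ∩ v = ∅ then C ^ (2 * w.card) * γ w else 0) ∧
    (∀ a b : Finset ℕ, 0 ≤ Δ a γup b) ∧
    (∀ ε > (0 : ℝ), ∃ r : ℕ, ∀ u : Finset ℕ, r ≤ u.sup id → γup u < ε) := by
  obtain rfl : γup = upperSum fun v => C ^ (2 * v.card) * γ v := funext hγup
  have hf₀ (v : Finset ℕ) : 0 ≤ C ^ (2 * v.card) * γ v :=
    mul_nonneg ((even_two_mul _).pow_nonneg C) (hnn v)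
  exact ⟨Δ_upperSum hsum, fun a b => Δ_upperSum_nonneg hf₀ hsum b a,
    fun ε hε => exists_forall_upperSum_lt hsum hε⟩

theorem stmt5 (C : ℝ) (hC : 0 < C) (γ : Finset ℕ → ℝ) (hnn : ∀ u, 0 ≤ γ u)
    (hsum : Summable fun v : Finset ℕ => C ^ (2 * v.card) * γ v)
    (γup : Finset ℕ → ℝ)
    (hγup : ∀ u, γup u = ∑' v : Finset ℕ, if u ⊆ v then C ^ (2 * v.card) * γ v else 0) :
    (∀ u v : Finset ℕ,
      Δ v γup u = ∑' w : Finset ℕ, if u ⊆ w ∧ w ∩ v = ∅ then C ^ (2 * w.card) * γ w else 0) ∧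
    (∀ a b : Finset ℕ, 0 ≤ Δ a γup b) ∧
    (∀ ε > (0 : ℝ), ∃ r : ℕ, ∀ u : Finset ℕ, r ≤ u.sup id → γup u < ε) :=
  stmt5_general C γ hnn hsum γup hγup
end

section
/- Let ρ : 𝒰 → ℝ be a family of real numbers indexed by the finite subsets of ℕ, let p, q ∈ ℕ with q ≤ p, and let u ⊆ [q]. Then Σ_{v : u ⊆ v ⊆ [q]} Σ_{w : v ⊆ w ⊆ [p]} (−1)^{|v|} ρ_w = (−1)^{|u|} Σ_{v ⊆ [p] ∖ [q]} ρ_{u ∪ v}. -/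
/-!
Exchanging the two sums, the coefficient of `ρ w` becomes the alternating sum of `(-1) ^ #v` over
the interval `u ⊆ v ⊆ w ∩ range q`, which vanishes unless `w ∩ range q = u`. The sets
`w ⊆ range p` with `w ∩ range q = u` are exactly the sets `u ∪ v` with `v ⊆ range p \ range q`.
-/

open Finset

theorem Finset.sum_Icc_sum_Icc_comm {α M : Type*} [Lattice α] [LocallyFiniteOrder α]
    [AddCommMonoid M] (a b c : α) (f : α → α → M) :
    ∑ x ∈ Icc a b, ∑ y ∈ Icc x c, f x y = ∑ y ∈ Icc a c, ∑ x ∈ Icc a (y ⊓ b), f x y := by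
  refine sum_comm' fun x y => ?_
  simp only [mem_Icc, le_inf_iff]
  constructor
  · rintro ⟨⟨hax, hxb⟩, hxy, hyc⟩
    exact ⟨⟨hax, hxy, hxb⟩, hax.trans hxy, hyc⟩
  · rintro ⟨⟨hax, hxy, hxb⟩, -, hyc⟩
    exact ⟨⟨hax, hxb⟩, hxy, hyc⟩

section

variable {α : Type*} [DecidableEq α] {s t : Finset α}

theorem Finset.sum_Icc_eq_sum_powerset_sdiff {M : Type*} [AddCommMonoid M] (h : s ⊆ t)
    (f : Finset α → M) : ∑ v ∈ Icc s t, f v = ∑ v ∈ (t \ s).powerset, f (s ∪ v) := by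
  rw [Icc_eq_image_powerset h, sum_image]
  intro v hv w hw hvw
  rw [mem_coe, mem_powerset, subset_sdiff] at hv hw
  simpa [union_sdiff_cancel_left hv.2.symm, union_sdiff_cancel_left hw.2.symm]
    using congrArg (· \ s) hvw

theorem Finset.sum_Icc_neg_one_pow_card {R : Type*} [Ring R] (h : s ⊆ t) :
    ∑ v ∈ Icc s t, (-1 : R) ^ #v = if s = t then (-1) ^ #s else 0 := by
  have hpow : ∀ v ∈ (t \ s).powerset, (-1 : R) ^ #(s ∪ v) = (-1) ^ #s * (-1) ^ #v := by
    intro v hv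
    rw [mem_powerset, subset_sdiff] at hv
    rw [card_union_of_disjoint hv.2.symm, pow_add]
  have hsum : ∑ v ∈ (t \ s).powerset, (-1 : R) ^ #v = if s = t then 1 else 0 := by
    have := congrArg (Int.cast : ℤ → R) (sum_powerset_neg_one_pow_card (x := t \ s))
    push_cast [apply_ite (Int.cast : ℤ → R)] at this
    rw [this]
    exact if_congr (sdiff_eq_empty_iff_subset.trans ⟨h.antisymm, fun hst => hst ▸ subset_rfl⟩)
      rfl rfl
  rw [sum_Icc_eq_sum_powerset_sdiff h, sum_congr rfl hpow, ← mul_sum, hsum]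
  split_ifs <;> simp

theorem Finset.filter_Icc_eq_inter {u A B : Finset α} (huA : u ⊆ A) (huB : u ⊆ B) :
    {w ∈ Icc u A | u = w ∩ B} = Icc u (u ∪ A \ B) := by
  ext w
  simp only [mem_filter, mem_Icc]
  grind

end

theorem stmt6 (ρ : Finset ℕ → ℝ) (p q : ℕ) (hqp : q ≤ p) (u : Finset ℕ)
    (hu : u ⊆ Finset.range q) :
    ∑ v ∈ (Finset.range q).powerset.filter (fun v => u ⊆ v),
      ∑ w ∈ (Finset.range p).powerset.filter (fun w => v ⊆ w),
        (-1 : ℝ) ^ v.card * ρ w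
      = (-1 : ℝ) ^ u.card * ∑ v ∈ (Finset.range p \ Finset.range q).powerset, ρ (u ∪ v) := by
  have hup : u ⊆ range p := hu.trans (range_subset_range.mpr hqp)
  have hinner : ∀ w ∈ Icc u (range p), ∑ v ∈ Icc u (w ⊓ range q), (-1 : ℝ) ^ #v * ρ w
      = if u = w ∩ range q then (-1) ^ #u * ρ w else 0 := by
    intro w hw
    rw [← sum_mul, inf_eq_inter, sum_Icc_neg_one_pow_card (subset_inter (mem_Icc.mp hw).1 hu),
      ite_mul, zero_mul]
  simp_rw [← Icc_eq_filter_powerset]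
  rw [sum_Icc_sum_Icc_comm, sum_congr rfl hinner, ← sum_filter, filter_Icc_eq_inter hup hu,
    sum_Icc_eq_sum_powerset_sdiff subset_union_left,
    union_sdiff_cancel_left (disjoint_sdiff.mono_left hu), mul_sum]
end

section
/- Let C > 0 and let γ : 𝒰 → [0,∞) be completely monotone. For every u ∈ 𝒰 the sequence s ↦ (Δ_{[s] ∖ u} γ)_u is non-increasing in [0, γ_u], so the limit (T↓ γ)_u := C^{−2|u|} lim_{s → ∞} (Δ_{[s] ∖ u} γ)_u exists. Then: (i) Σ_{v ∈ 𝒰} C^{2|v|} (T↓ γ)_v < ∞; (ii) for every u ∈ 𝒰, Σ_{v ∈ 𝒰, u ⊆ v} C^{2|v|} (T↓ γ)_v = lim_{r → ∞} lim_{s → ∞} (Δ_{[s] ∖ [r]} γ)_u ≤ γ_u (in particular, both iterated limits exist). -/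
open Finset Filter Topology

/-! Peeling off one coordinate, `Δ_{v ∪ {a}} γ_u = Δ_v γ_u − Δ_v γ_{u ∪ {a}}`, so complete
monotonicity makes `Δ_v γ_u` antitone in `v` and bounded by `γ_u`. Iterating the same identity
over `a ∖ u` gives `Δ_{b ∖ a} γ_u = Σ_{u ⊆ v ⊆ a} Δ_{b ∖ v} γ_v` for `u ⊆ a ⊆ b`. With `a = [r]`
and `b = [s]`, `s → ∞`, the right side becomes the partial sum `Σ_{u ⊆ v ⊆ [r]} C^{2|v|} (T↓γ)_v`,
which is therefore at most `γ_u`; letting `r → ∞` yields both the summability and the identity. -/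

lemma delta_empty (γ : Finset ℕ → ℝ) (u : Finset ℕ) : Δ ∅ γ u = γ u := by
  simp [Δ]

lemma delta_insert {a : ℕ} {v : Finset ℕ} (ha : a ∉ v) (γ : Finset ℕ → ℝ) (u : Finset ℕ) :
    Δ (insert a v) γ u = Δ v γ u - Δ v γ (insert a u) := by
  rw [Δ, Δ, Δ, sum_powerset_insert ha, sub_eq_add_neg, ← sum_neg_distrib]
  congr 1
  refine sum_congr rfl fun w hw => ?_
  have haw : a ∉ w := fun h => ha (mem_powerset.mp hw h)
  rw [card_insert_of_notMem haw, union_insert, ← insert_union, pow_succ]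
  ring

lemma delta_eq_sum_powerset (γ : Finset ℕ → ℝ) (u : Finset ℕ) {t v : Finset ℕ}
    (htv : Disjoint t v) : Δ v γ u = ∑ w ∈ t.powerset, Δ (v ∪ (t \ w)) γ (u ∪ w) := by
  induction t using Finset.induction_on generalizing u with
  | empty => simp
  | @insert a t ha ih =>
    have hav : a ∉ v := disjoint_left.mp htv (mem_insert_self a t)
    rw [ih u (htv.mono_left (subset_insert a t)), sum_powerset_insert ha, ← sum_add_distrib]
    refine sum_congr rfl fun w hw => ?_
    have haw : a ∉ w := fun h => ha (mem_powerset.mp hw h)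
    have hat : a ∉ v ∪ (t \ w) := by simp [hav, ha]
    rw [insert_sdiff_of_notMem _ haw, union_insert, delta_insert hat, insert_sdiff_insert,
      sdiff_insert_of_notMem ha, union_insert]
    ring

lemma delta_sdiff_eq_sum_Icc (γ : Finset ℕ → ℝ) {u a b : Finset ℕ} (hua : u ⊆ a) (hab : a ⊆ b) :
    Δ (b \ a) γ u = ∑ v ∈ Icc u a, Δ (b \ v) γ v := by
  have hdisj : Disjoint (a \ u) (b \ a) := disjoint_sdiff.mono_left sdiff_subset
  rw [delta_eq_sum_powerset γ u hdisj, Icc_eq_image_powerset hua, sum_image]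
  · refine sum_congr rfl fun w hw => ?_
    rw [mem_powerset] at hw
    congr 1
    ext x
    have := @hua x; have := @hab x; have := @hw x
    simp only [Finset.mem_union, Finset.mem_sdiff] at *
    tauto
  · intro w₁ hw₁ w₂ hw₂ h
    rw [← union_sdiff_cancel_left (disjoint_of_subset_right (mem_powerset.mp hw₁) disjoint_sdiff),
      ← union_sdiff_cancel_left (disjoint_of_subset_right (mem_powerset.mp hw₂) disjoint_sdiff)]
    exact congrArg (· \ u) h

lemma tendsto_delta_range_sdiff_range {γ F : Finset ℕ → ℝ}
    (hF : ∀ v, Tendsto (fun s => Δ (range s \ v) γ v) atTop (𝓝 (F v)))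
    {u : Finset ℕ} {r : ℕ} (hu : u ⊆ range r) :
    Tendsto (fun s => Δ (range s \ range r) γ u) atTop (𝓝 (∑ v ∈ Icc u (range r), F v)) := by
  refine (tendsto_finsetSum _ fun v _ => hF v).congr' ?_
  filter_upwards [eventually_ge_atTop r] with s hrs
  exact (delta_sdiff_eq_sum_Icc γ hu (range_mono hrs)).symm

def IsCompletelyMonotone (γ : Finset ℕ → ℝ) : Prop :=
  ∀ v u : Finset ℕ, 0 ≤ Δ v γ u

namespace IsCompletelyMonotone

variable {γ : Finset ℕ → ℝ} (hγ : IsCompletelyMonotone γ)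
include hγ

lemma antitone_delta (u : Finset ℕ) : Antitone fun v => Δ v γ u :=
  antitone_iff_forall_insert_le.mpr fun v a ha => by
    rw [delta_insert ha]
    linarith [hγ v (insert a u)]

lemma delta_le (v u : Finset ℕ) : Δ v γ u ≤ γ u :=
  delta_empty γ u ▸ hγ.antitone_delta u (empty_subset v)

lemma antitone_delta_range_sdiff (a u : Finset ℕ) :
    Antitone fun s => Δ (range s \ a) γ u :=
  (hγ.antitone_delta u).comp_monotone fun _ _ h => sdiff_subset_sdiff (range_mono h) le_rfl

lemma tendsto_delta_range_sdiff (a u : Finset ℕ) :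
    Tendsto (fun s => Δ (range s \ a) γ u) atTop (𝓝 (⨅ s, Δ (range s \ a) γ u)) :=
  tendsto_atTop_ciInf (hγ.antitone_delta_range_sdiff a u) ⟨0, by
    rintro _ ⟨s, rfl⟩
    exact hγ _ _⟩

variable {F : Finset ℕ → ℝ}
  (hF : ∀ v, Tendsto (fun s => Δ (range s \ v) γ v) atTop (𝓝 (F v)))
include hF

lemma limit_nonneg (v : Finset ℕ) : 0 ≤ F v :=
  ge_of_tendsto' (hF v) fun _ => hγ _ _

lemma sum_Icc_range_le {u : Finset ℕ} {r : ℕ} (hu : u ⊆ range r) :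
    ∑ v ∈ Icc u (range r), F v ≤ γ u :=
  le_of_tendsto (tendsto_delta_range_sdiff_range hF hu)
    (Eventually.of_forall fun _ => hγ.delta_le _ _)

lemma sum_ite_subset_le (u : Finset ℕ) (B : Finset (Finset ℕ)) :
    ∑ v ∈ B, (if u ⊆ v then F v else 0) ≤ γ u := by
  obtain ⟨r, hr⟩ := (u ∪ B.sup id).exists_nat_subset_range
  have hBr : B ⊆ (range r).powerset := fun v hv =>
    mem_powerset.mpr ((le_sup (f := id) hv).trans (subset_union_right.trans hr))
  calc ∑ v ∈ B, (if u ⊆ v then F v else 0)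
      ≤ ∑ v ∈ (range r).powerset, (if u ⊆ v then F v else 0) :=
        sum_le_sum_of_subset_of_nonneg hBr fun v _ _ =>
          ite_nonneg (hγ.limit_nonneg hF v) le_rfl
    _ = ∑ v ∈ Icc u (range r), F v := by rw [Icc_eq_filter_powerset, sum_filter]
    _ ≤ γ u := hγ.sum_Icc_range_le hF (subset_union_left.trans hr)

lemma summable_ite_subset (u : Finset ℕ) : Summable fun v => if u ⊆ v then F v else 0 :=
  summable_of_sum_le (fun v => ite_nonneg (hγ.limit_nonneg hF v) le_rfl)
    (hγ.sum_ite_subset_le hF u)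

lemma tendsto_sum_Icc_range (u : Finset ℕ) :
    Tendsto (fun r => ∑ v ∈ Icc u (range r), F v) atTop
      (𝓝 (∑' v, if u ⊆ v then F v else 0)) := by
  have hpow : Tendsto (fun r => (range r).powerset) atTop atTop :=
    tendsto_atTop_finset_of_monotone (fun _ _ h => powerset_mono.mpr (range_mono h))
      fun v => (v.exists_nat_subset_range.imp fun _ => mem_powerset.mpr)
  simpa only [Icc_eq_filter_powerset, sum_filter, Function.comp_def] using
    (hγ.summable_ite_subset hF u).hasSum.comp hpow

end IsCompletelyMonotone

theorem stmt9_general (C : ℝ) (γ : Finset ℕ → ℝ)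
    (hcm : ∀ v u : Finset ℕ, 0 ≤ Δ v γ u) :
    (∀ u : Finset ℕ,
      (∀ s t : ℕ, s ≤ t → Δ (Finset.range t \ u) γ u ≤ Δ (Finset.range s \ u) γ u) ∧
      ∀ s : ℕ, 0 ≤ Δ (Finset.range s \ u) γ u ∧ Δ (Finset.range s \ u) γ u ≤ γ u) ∧
    ∀ Td : Finset ℕ → ℝ,
      (∀ u : Finset ℕ, Tendsto (fun s : ℕ => Δ (Finset.range s \ u) γ u) atTop
        (𝓝 (C ^ (2 * u.card) * Td u))) →
      (Summable fun v : Finset ℕ => C ^ (2 * v.card) * Td v) ∧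
      ∀ u : Finset ℕ, ∃ g : ℕ → ℝ,
        (∀ r : ℕ, Tendsto (fun s : ℕ => Δ (Finset.range s \ Finset.range r) γ u) atTop
          (𝓝 (g r))) ∧
        Tendsto g atTop
          (𝓝 (∑' v : Finset ℕ, if u ⊆ v then C ^ (2 * v.card) * Td v else 0)) ∧
        (∑' v : Finset ℕ, if u ⊆ v then C ^ (2 * v.card) * Td v else 0) ≤ γ u := by
  have hγ : IsCompletelyMonotone γ := hcm
  refine ⟨fun u => ⟨fun s t hst => hγ.antitone_delta_range_sdiff u u hst,
    fun s => ⟨hγ _ _, hγ.delta_le _ _⟩⟩, fun Td hTd => ⟨?_, fun u => ?_⟩⟩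
  · simpa using hγ.summable_ite_subset hTd ∅
  let g r := ⨅ s, Δ (range s \ range r) γ u
  have hg : ∀ r, Tendsto (fun s => Δ (range s \ range r) γ u) atTop (𝓝 (g r)) :=
    fun r => hγ.tendsto_delta_range_sdiff (range r) u
  have hg_eq : ∀ᶠ r in atTop, ∑ v ∈ Icc u (range r), C ^ (2 * v.card) * Td v = g r := by
    filter_upwards [tendsto_finset_range.eventually_ge_atTop u] with r hr
    exact tendsto_nhds_unique (tendsto_delta_range_sdiff_range hTd hr) (hg r)
  have hg_lim := (hγ.tendsto_sum_Icc_range hTd u).congr' hg_eq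
  refine ⟨g, hg, hg_lim, le_of_tendsto hg_lim ?_⟩
  filter_upwards [hg_eq, tendsto_finset_range.eventually_ge_atTop u] with r hr hur
  exact hr ▸ hγ.sum_Icc_range_le hTd hur

theorem stmt9 (C : ℝ) (hC : 0 < C) (γ : Finset ℕ → ℝ) (hnn : ∀ u, 0 ≤ γ u)
    (hcm : ∀ v u : Finset ℕ, 0 ≤ Δ v γ u) :
    (∀ u : Finset ℕ,
      (∀ s t : ℕ, s ≤ t → Δ (Finset.range t \ u) γ u ≤ Δ (Finset.range s \ u) γ u) ∧
      ∀ s : ℕ, 0 ≤ Δ (Finset.range s \ u) γ u ∧ Δ (Finset.range s \ u) γ u ≤ γ u) ∧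
    ∀ Td : Finset ℕ → ℝ,
      (∀ u : Finset ℕ, Tendsto (fun s : ℕ => Δ (Finset.range s \ u) γ u) atTop
        (𝓝 (C ^ (2 * u.card) * Td u))) →
      (Summable fun v : Finset ℕ => C ^ (2 * v.card) * Td v) ∧
      ∀ u : Finset ℕ, ∃ g : ℕ → ℝ,
        (∀ r : ℕ, Tendsto (fun s : ℕ => Δ (Finset.range s \ Finset.range r) γ u) atTop
          (𝓝 (g r))) ∧
        Tendsto g atTop
          (𝓝 (∑' v : Finset ℕ, if u ⊆ v then C ^ (2 * v.card) * Td v else 0)) ∧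
        (∑' v : Finset ℕ, if u ⊆ v then C ^ (2 * v.card) * Td v else 0) ≤ γ u :=
  stmt9_general C γ hcm
end

section
/- Let C > 0 and let γ : 𝒰 → [0,∞) satisfy Σ_{v ∈ 𝒰} C^{2|v|} γ_v < ∞; put γ↑_u := Σ_{v ∈ 𝒰, u ⊆ v} C^{2|v|} γ_v. Then: (i) for every τ > 0, if Σ_{u ∈ 𝒰} (γ↑_u)^{1/τ} < ∞ then Σ_{u ∈ 𝒰} C^{2|u|/τ} γ_u^{1/τ} < ∞; (ii) for every τ ≥ 1, if Σ_{u ∈ 𝒰} 2^{|u|} C^{2|u|/τ} γ_u^{1/τ} < ∞ then Σ_{u ∈ 𝒰} (γ↑_u)^{1/τ} < ∞. -/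
/-!
Part (i) is a termwise comparison: the summand `v = u` alone shows `C^{2|u|} γ_u ≤ γ↑_u`.
For (ii), `1/τ ≤ 1` makes `x ↦ x^{1/τ}` subadditive on `[0, ∞)`, so
`(γ↑_u)^{1/τ} ≤ Σ_{v ⊇ u} C^{2|v|/τ} γ_v^{1/τ}`; summing over `u` counts each `v` once for each
of its `2^{|v|}` subsets.
-/

open Finset

theorem Real.rpow_tsum_le_tsum_rpow {ι : Type*} {f : ι → ℝ} {p : ℝ} (hf : ∀ i, 0 ≤ f i) (hp : 0 < p)
    (hp1 : p ≤ 1) (hfp : Summable fun i ↦ f i ^ p) : (∑' i, f i) ^ p ≤ ∑' i, f i ^ p := by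
  by_cases hsf : Summable f
  · have hsums : Filter.Tendsto (fun s : Finset ι ↦ (∑ i ∈ s, f i) ^ p) Filter.atTop
        (nhds ((∑' i, f i) ^ p)) :=
      (Real.continuousAt_rpow_const _ p (Or.inr hp.le)).tendsto.comp hsf.hasSum
    refine le_of_tendsto' hsums fun s ↦ ?_
    calc (∑ i ∈ s, f i) ^ p ≤ ∑ i ∈ s, f i ^ p :=
          le_sum_of_subadditive_on_pred (· ^ p) (0 ≤ ·) (Real.zero_rpow hp.ne').le
            (fun x y hx hy ↦ Real.rpow_add_le_add_rpow hx hy hp.le hp1)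
            (fun _ _ ↦ add_nonneg) f fun i _ ↦ hf i
      _ ≤ ∑' i, f i ^ p := hfp.sum_le_tsum s fun i _ ↦ Real.rpow_nonneg (hf i) p
  · rw [tsum_eq_zero_of_not_summable hsf, Real.zero_rpow hp.ne']
    exact tsum_nonneg fun i ↦ Real.rpow_nonneg (hf i) p

section SupersetSum

variable {α : Type*} [DecidableEq α] {w : Finset α → ℝ}

noncomputable def supersetSum (w : Finset α → ℝ) (u : Finset α) : ℝ :=
  ∑' v, if u ⊆ v then w v else 0

lemma summable_ite_subset (hw : ∀ v, 0 ≤ w v) (hs : Summable w) (u : Finset α) :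
    Summable fun v ↦ if u ⊆ v then w v else 0 :=
  hs.of_nonneg_of_le (fun v ↦ ite_nonneg (hw v) le_rfl) fun v ↦ by
    split_ifs
    exacts [le_rfl, hw v]

lemma le_supersetSum (hw : ∀ v, 0 ≤ w v) (hs : Summable w) (u : Finset α) :
    w u ≤ supersetSum w u := by
  simpa [supersetSum] using
    (summable_ite_subset hw hs u).le_tsum u fun v _ ↦ ite_nonneg (hw v) le_rfl

lemma supersetSum_nonneg (hw : ∀ v, 0 ≤ w v) (u : Finset α) : 0 ≤ supersetSum w u :=
  tsum_nonneg fun v ↦ ite_nonneg (hw v) le_rfl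

lemma tsum_ite_subset_const (v : Finset α) (c : ℝ) :
    ∑' u : Finset α, (if u ⊆ v then c else 0) = 2 ^ v.card * c := by
  rw [tsum_eq_sum (s := v.powerset) fun u hu ↦ if_neg (mt mem_powerset.mpr hu),
    sum_congr rfl fun u hu ↦ if_pos (mem_powerset.mp hu), sum_const, card_powerset, nsmul_eq_mul]
  push_cast
  rfl

lemma summable_supersetSum (hw : ∀ v, 0 ≤ w v) (hs : Summable fun v ↦ 2 ^ v.card * w v) :
    Summable (supersetSum w) := by
  have hpairs : Summable fun q : Finset α × Finset α ↦ if q.2 ⊆ q.1 then w q.1 else 0 := by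
    refine (summable_prod_of_nonneg fun q ↦ ?_).mpr ⟨fun v ↦ ?_, ?_⟩
    · exact ite_nonneg (hw q.1) le_rfl
    · exact summable_of_ne_finset_zero (s := v.powerset) fun u hu ↦ if_neg (mt mem_powerset.mpr hu)
    · simpa only [tsum_ite_subset_const] using hs
  exact hpairs.prod_symm.prod

lemma rpow_supersetSum_le (hw : ∀ v, 0 ≤ w v) {p : ℝ} (hp : 0 < p) (hp1 : p ≤ 1)
    (hs : Summable fun v ↦ w v ^ p) (u : Finset α) :
    supersetSum w u ^ p ≤ supersetSum (fun v ↦ w v ^ p) u := by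
  have hite : ∀ v, (if u ⊆ v then w v else 0) ^ p = if u ⊆ v then w v ^ p else 0 := fun v ↦ by
    split_ifs <;> simp [Real.zero_rpow hp.ne']
  have := Real.rpow_tsum_le_tsum_rpow (f := fun v ↦ if u ⊆ v then w v else 0)
    (fun v ↦ ite_nonneg (hw v) le_rfl) hp hp1
    (by simpa only [hite] using summable_ite_subset (fun v ↦ Real.rpow_nonneg (hw v) p) hs u)
  simpa only [supersetSum, hite] using this

theorem summable_rpow_supersetSum (hw : ∀ v, 0 ≤ w v) {p : ℝ} (hp : 0 < p) (hp1 : p ≤ 1)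
    (hs : Summable fun v ↦ 2 ^ v.card * w v ^ p) :
    Summable fun u ↦ supersetSum w u ^ p := by
  have hwp : ∀ v, 0 ≤ w v ^ p := fun v ↦ Real.rpow_nonneg (hw v) p
  have hs' : Summable fun v ↦ w v ^ p :=
    hs.of_nonneg_of_le hwp fun v ↦ le_mul_of_one_le_left (hwp v) (one_le_pow₀ one_le_two)
  exact (summable_supersetSum hwp hs).of_nonneg_of_le
    (fun u ↦ Real.rpow_nonneg (supersetSum_nonneg hw u) p) (rpow_supersetSum_le hw hp hp1 hs')

theorem Summable.of_rpow_supersetSum (hw : ∀ v, 0 ≤ w v) (hs : Summable w) {p : ℝ} (hp : 0 ≤ p)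
    (h : Summable fun u ↦ supersetSum w u ^ p) : Summable fun u ↦ w u ^ p :=
  h.of_nonneg_of_le (fun u ↦ Real.rpow_nonneg (hw u) p) fun u ↦
    Real.rpow_le_rpow (hw u) (le_supersetSum hw hs u) hp

end SupersetSum

theorem stmt12 (C : ℝ) (hC : 0 < C) (γ : Finset ℕ → ℝ) (hnn : ∀ u, 0 ≤ γ u)
    (hsum : Summable fun v : Finset ℕ => C ^ (2 * v.card) * γ v)
    (γup : Finset ℕ → ℝ)
    (hγup : ∀ u, γup u = ∑' v : Finset ℕ, if u ⊆ v then C ^ (2 * v.card) * γ v else 0) :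
    (∀ τ : ℝ, 0 < τ →
      (Summable fun u : Finset ℕ => γup u ^ (1 / τ)) →
      Summable fun u : Finset ℕ => C ^ (2 * (u.card : ℝ) / τ) * γ u ^ (1 / τ)) ∧
    (∀ τ : ℝ, 1 ≤ τ →
      (Summable fun u : Finset ℕ =>
        (2 : ℝ) ^ u.card * C ^ (2 * (u.card : ℝ) / τ) * γ u ^ (1 / τ)) →
      Summable fun u : Finset ℕ => γup u ^ (1 / τ)) := by
  set w : Finset ℕ → ℝ := fun v ↦ C ^ (2 * v.card) * γ v
  have hw : ∀ v, 0 ≤ w v := fun v ↦ mul_nonneg (pow_nonneg hC.le _) (hnn v)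
  have hγup_eq : γup = supersetSum w := funext hγup
  have hwτ : ∀ τ v, w v ^ (1 / τ) = C ^ (2 * (v.card : ℝ) / τ) * γ v ^ (1 / τ) := fun τ v ↦ by
    rw [Real.mul_rpow (pow_nonneg hC.le _) (hnn v), ← Real.rpow_natCast, ← Real.rpow_mul hC.le]
    push_cast
    ring_nf
  subst hγup_eq
  refine ⟨fun τ hτ h ↦ ?_, fun τ hτ h ↦ ?_⟩
  · simpa only [hwτ] using hsum.of_rpow_supersetSum hw (by positivity) h
  · have hτ0 : 0 < τ := one_pos.trans_le hτ
    refine summable_rpow_supersetSum hw (by positivity) ((div_le_one hτ0).mpr hτ) ?_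
    simpa only [hwτ, mul_assoc] using h
end

section
/- Let (γ_j)_{j ∈ ℕ} be a non-increasing sequence of non-negative real numbers and define the product weights γ : 𝒰 → [0,∞) by γ_u := Π_{j ∈ u} γ_j (with γ_∅ = 1). Then: (i) for all u, v ∈ 𝒰 with u ∩ v = ∅ one has (Δ_v γ)_u = γ_u Π_{j ∈ v} (1 − γ_j); (ii) γ is completely monotone if and only if 0 ≤ γ_j ≤ 1 for every j ∈ ℕ. -/
/-!
Removing one index `a ∉ v` from `v` splits the alternating sum: `Δ_{v ∪ {a}} γ_u = Δ_v γ_u - Δ_v γ_{u ∪ {a}}`.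
Hence `Δ_v γ_u = 0` as soon as `u` and `v` meet, while for product weights and disjoint `u`, `v`
each index `a ∈ v` contributes a factor `1 - γ_a`. Complete monotonicity thus reduces to the
nonnegativity of `γ_j = (Δ_∅ γ)_{{j}}` and of `1 - γ_j = (Δ_{{j}} γ)_∅`.
-/

open Finset

theorem Δ_insert (γ : Finset ℕ → ℝ) {a : ℕ} {v : Finset ℕ} (ha : a ∉ v) (u : Finset ℕ) :
    Δ (insert a v) γ u = Δ v γ u - Δ v γ (insert a u) := by
  rw [Δ, Δ, Δ, sum_powerset_insert ha, sub_eq_add_neg, ← sum_neg_distrib]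
  congr 1
  refine sum_congr rfl fun w hw => ?_
  have haw : a ∉ w := fun h => ha (mem_powerset.mp hw h)
  rw [card_insert_of_notMem haw, union_insert, ← insert_union, pow_succ]
  ring

theorem Δ_eq_zero_of_mem_of_mem (γ : Finset ℕ → ℝ) {a : ℕ} {u v : Finset ℕ} (hau : a ∈ u)
    (hav : a ∈ v) : Δ v γ u = 0 := by
  rw [← insert_erase hav, Δ_insert γ (notMem_erase a v), insert_eq_of_mem hau, sub_self]

theorem Δ_prod_of_disjoint (g : ℕ → ℝ) {u v : Finset ℕ} (huv : Disjoint u v) :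
    Δ v (fun w => ∏ j ∈ w, g j) u = (∏ j ∈ u, g j) * ∏ j ∈ v, (1 - g j) := by
  induction v using Finset.induction_on generalizing u with
  | empty => simp [Δ]
  | @insert a v ha ih =>
    have hau : a ∉ u := fun h => disjoint_left.mp huv h (mem_insert_self a v)
    have huv' : Disjoint u v := huv.mono_right (subset_insert a v)
    have hauv : Disjoint (insert a u) v := disjoint_insert_left.mpr ⟨ha, huv'⟩
    rw [Δ_insert _ ha, ih huv', ih hauv, prod_insert hau, prod_insert ha]
    ring

theorem Δ_prod_nonneg_iff (g : ℕ → ℝ) :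
    (∀ v u : Finset ℕ, 0 ≤ Δ v (fun w => ∏ j ∈ w, g j) u) ↔ ∀ j, 0 ≤ g j ∧ g j ≤ 1 := by
  constructor
  · intro h j
    have hg := h ∅ {j}
    have hg' := h {j} ∅
    rw [Δ_prod_of_disjoint g (disjoint_empty_right _)] at hg
    rw [Δ_prod_of_disjoint g (disjoint_empty_left _)] at hg'
    simp only [prod_singleton, prod_empty, mul_one, one_mul, sub_nonneg] at hg hg'
    exact ⟨hg, hg'⟩
  · intro h v u
    by_cases huv : Disjoint u v
    · rw [Δ_prod_of_disjoint g huv]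
      exact mul_nonneg (prod_nonneg fun j _ => (h j).1)
        (prod_nonneg fun j _ => sub_nonneg.mpr (h j).2)
    · obtain ⟨a, hau, hav⟩ := not_disjoint_iff.mp huv
      exact (Δ_eq_zero_of_mem_of_mem _ hau hav).ge

theorem stmt13_general (γseq : ℕ → ℝ)
    (γ : Finset ℕ → ℝ) (hγ : ∀ u, γ u = ∏ j ∈ u, γseq j) :
    (∀ u v : Finset ℕ, u ∩ v = ∅ → Δ v γ u = γ u * ∏ j ∈ v, (1 - γseq j)) ∧
    ((∀ v u : Finset ℕ, 0 ≤ Δ v γ u) ↔ ∀ j, 0 ≤ γseq j ∧ γseq j ≤ 1) := by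
  obtain rfl : γ = fun u => ∏ j ∈ u, γseq j := funext hγ
  exact ⟨fun u v huv => Δ_prod_of_disjoint γseq (disjoint_iff_inter_eq_empty.mpr huv),
    Δ_prod_nonneg_iff γseq⟩

theorem stmt13 (γseq : ℕ → ℝ) (hmono : Antitone γseq) (hnn : ∀ j, 0 ≤ γseq j)
    (γ : Finset ℕ → ℝ) (hγ : ∀ u, γ u = ∏ j ∈ u, γseq j) :
    (∀ u v : Finset ℕ, u ∩ v = ∅ → Δ v γ u = γ u * ∏ j ∈ v, (1 - γseq j)) ∧
    ((∀ v u : Finset ℕ, 0 ≤ Δ v γ u) ↔ ∀ j, 0 ≤ γseq j ∧ γseq j ≤ 1) :=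
  stmt13_general γseq γ hγ
end

section
/- Let (γ_j)_{j ∈ ℕ} be a non-increasing sequence with 0 ≤ γ_j ≤ 1 for all j, and define the product weights γ : 𝒰 → [0,∞) by γ_u := Π_{j ∈ u} γ_j; then γ is completely monotone, and for any C > 0 the following hold: (a) γ_u → 0 along the net directed by max u (i.e., ∀ε > 0 ∃r ∀u with max u ≥ r: γ_u < ε) if and only if lim_{j → ∞} γ_j = 0; (b) T↓ γ = 0 if and only if Σ_{j ∈ ℕ} γ_j = ∞, where (T↓ γ)_u := C^{−2|u|} lim_{s → ∞} (Δ_{[s] ∖ u} γ)_u; (c) the following are equivalent: for every u ∈ 𝒰, lim_{r → ∞} lim_{s → ∞} (Δ_{[s] ∖ [r]} γ)_u = γ_u; Σ_{j ∈ ℕ} γ_j < ∞; Σ_{u ∈ 𝒰} γ_u < ∞. -/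
/-! For product weights the difference operator factorises,
`(Δ_v γ)_u = γ_u ∏_{j ∈ v} (1 - γ_j)` whenever `v` and `u` are disjoint. Hence the limits in (b)
and (c) are `γ_u` times infinite products `∏ (1 - γ_j)`: these vanish when `Σ γ_j = ∞`, because
`1 - x ≤ e^{-x}`, and over the tail of a convergent series they tend to `1`, because
`∏ (1 - x_j) ≥ 1 - Σ x_j`. Summability over `𝒰` comes from
`Σ_{u ⊆ F} γ_u = ∏_{j ∈ F} (1 + γ_j) ≤ exp (Σ γ_j)`. -/

open Finset Filter Topology

lemma one_sub_sum_le_prod_one_sub {ι : Type*} (s : Finset ι) {f : ι → ℝ}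
    (h0 : ∀ i ∈ s, 0 ≤ f i) (h1 : ∀ i ∈ s, f i ≤ 1) :
    1 - ∑ i ∈ s, f i ≤ ∏ i ∈ s, (1 - f i) := by
  classical
  induction s using Finset.induction_on with
  | empty => simp
  | insert i s hi ih =>
    rw [sum_insert hi, prod_insert hi]
    have hfi0 := h0 i (mem_insert_self i s)
    have hfi1 := h1 i (mem_insert_self i s)
    have hsum : 0 ≤ ∑ j ∈ s, f j := sum_nonneg fun j hj => h0 j (mem_insert_of_mem hj)
    have ih := ih (fun j hj => h0 j (mem_insert_of_mem hj))
      (fun j hj => h1 j (mem_insert_of_mem hj))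
    nlinarith [mul_le_mul_of_nonneg_left ih (sub_nonneg.2 hfi1)]

lemma prod_one_sub_le_exp_neg_sum {ι : Type*} (s : Finset ι) {f : ι → ℝ}
    (h1 : ∀ i ∈ s, f i ≤ 1) : ∏ i ∈ s, (1 - f i) ≤ Real.exp (-∑ i ∈ s, f i) := by
  rw [← sum_neg_distrib, Real.exp_sum]
  exact prod_le_prod (fun i hi => sub_nonneg.2 (h1 i hi)) fun i _ => Real.one_sub_le_exp_neg _

lemma sum_le_tsum_sub_sum_range {a : ℕ → ℝ} (hs : Summable a) (h0 : ∀ j, 0 ≤ a j)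
    {F : Finset ℕ} {N : ℕ} (hF : ∀ j ∈ F, N ≤ j) :
    ∑ j ∈ F, a j ≤ ∑' j, a j - ∑ j ∈ range N, a j := by
  have hdisj : Disjoint (range N) F :=
    disjoint_left.2 fun j hj hjF => (mem_range.1 hj).not_ge (hF j hjF)
  have := hs.sum_le_tsum (range N ∪ F) (fun j _ => h0 j)
  rw [sum_union hdisj] at this
  linarith

lemma one_sub_tail_le_prod_one_sub {a : ℕ → ℝ} (hs : Summable a) (h0 : ∀ j, 0 ≤ a j)
    (h1 : ∀ j, a j ≤ 1) {F : Finset ℕ} {N : ℕ} (hF : ∀ j ∈ F, N ≤ j) :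
    1 - (∑' j, a j - ∑ j ∈ range N, a j) ≤ ∏ j ∈ F, (1 - a j) :=
  (sub_le_sub_left (sum_le_tsum_sub_sum_range hs h0 hF) 1).trans
    (one_sub_sum_le_prod_one_sub F (fun j _ => h0 j) fun j _ => h1 j)

lemma tendsto_tsum_sub_sum_range {a : ℕ → ℝ} (hs : Summable a) :
    Tendsto (fun N => ∑' j, a j - ∑ j ∈ range N, a j) atTop (𝓝 0) := by
  simpa using hs.hasSum.tendsto_sum_nat.const_sub (∑' j, a j)

noncomputable def prodWeight (a : ℕ → ℝ) (u : Finset ℕ) : ℝ := ∏ j ∈ u, a j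

lemma prodWeight_union (a : ℕ → ℝ) (u w : Finset ℕ) :
    prodWeight a (u ∪ w) = prodWeight a u * ∏ j ∈ w, if j ∈ u then 1 else a j := by
  rw [prodWeight, prodWeight, ← union_sdiff_self_eq_union, prod_union disjoint_sdiff,
    prod_ite, prod_const_one, one_mul, filter_not, filter_mem_eq_inter, sdiff_inter_self_left]

lemma Δ_prodWeight (a : ℕ → ℝ) (v u : Finset ℕ) :
    Δ v (prodWeight a) u = prodWeight a u * ∏ j ∈ v, (1 - if j ∈ u then 1 else a j) := by
  simp only [Δ, prodWeight_union, prod_sub, prod_const_one, mul_one, mul_sum]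
  exact sum_congr rfl fun w _ => by ring

lemma Δ_prodWeight_of_disjoint (a : ℕ → ℝ) {v u : Finset ℕ} (h : Disjoint v u) :
    Δ v (prodWeight a) u = prodWeight a u * ∏ j ∈ v, (1 - a j) := by
  rw [Δ_prodWeight]
  exact congrArg _ (prod_congr rfl fun j hj => by rw [if_neg (disjoint_left.1 h hj)])

section ProdWeight

variable {a : ℕ → ℝ}

lemma prodWeight_nonneg (h0 : ∀ j, 0 ≤ a j) (u : Finset ℕ) : 0 ≤ prodWeight a u :=
  prod_nonneg fun j _ => h0 j

lemma prodWeight_le_one (h0 : ∀ j, 0 ≤ a j) (h1 : ∀ j, a j ≤ 1) (u : Finset ℕ) :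
    prodWeight a u ≤ 1 :=
  prod_le_one (fun j _ => h0 j) fun j _ => h1 j

lemma prodWeight_le_of_mem (h0 : ∀ j, 0 ≤ a j) (h1 : ∀ j, a j ≤ 1) {u : Finset ℕ} {j : ℕ}
    (hj : j ∈ u) : prodWeight a u ≤ a j := by
  rw [prodWeight, ← mul_prod_erase u a hj]
  exact mul_le_of_le_one_right (h0 j) (prodWeight_le_one h0 h1 _)

lemma summable_prodWeight_iff (h0 : ∀ j, 0 ≤ a j) : Summable (prodWeight a) ↔ Summable a := by
  refine ⟨fun h => ?_, fun h => ?_⟩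
  · exact (h.comp_injective singleton_injective).congr fun j => prod_singleton a j
  · refine summable_of_sum_le (c := Real.exp (∑' j, a j)) (prodWeight_nonneg h0) fun S => ?_
    calc ∑ u ∈ S, prodWeight a u ≤ ∑ u ∈ (S.sup id).powerset, prodWeight a u :=
          sum_le_sum_of_subset_of_nonneg (fun u hu => mem_powerset.2 (le_sup (f := id) hu))
            fun u _ _ => prodWeight_nonneg h0 u
      _ = ∏ j ∈ S.sup id, (1 + a j) := (prod_one_add _).symm
      _ ≤ Real.exp (∑ j ∈ S.sup id, a j) := Real.prod_one_add_le_exp_sum _ h0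
      _ ≤ Real.exp (∑' j, a j) := Real.exp_le_exp.2 (h.sum_le_tsum _ fun j _ => h0 j)

lemma forall_exists_prodWeight_lt_iff_tendsto (h0 : ∀ j, 0 ≤ a j) (h1 : ∀ j, a j ≤ 1) :
    (∀ ε > (0 : ℝ), ∃ r : ℕ, ∀ u : Finset ℕ, r ≤ u.sup id → prodWeight a u < ε) ↔
      Tendsto a atTop (𝓝 0) := by
  refine ⟨fun h => Metric.tendsto_atTop.2 fun ε hε => ?_, fun h ε hε => ?_⟩
  · obtain ⟨r, hr⟩ := h ε hε
    refine ⟨r, fun n hn => ?_⟩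
    simpa [prodWeight, abs_of_nonneg (h0 n)] using hr {n} (by simpa using hn)
  · obtain ⟨N, hN⟩ := eventually_atTop.1 (h.eventually_lt_const hε)
    refine ⟨N + 1, fun u hu => ?_⟩
    obtain ⟨m, hm, hNm⟩ := (Finset.le_sup_iff N.succ_pos).1 hu
    exact (prodWeight_le_of_mem h0 h1 hm).trans_lt (hN m (by simp at hNm; omega))

lemma Δ_prodWeight_nonneg (h0 : ∀ j, 0 ≤ a j) (h1 : ∀ j, a j ≤ 1) (v u : Finset ℕ) :
    0 ≤ Δ v (prodWeight a) u := by
  rw [Δ_prodWeight]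
  refine mul_nonneg (prodWeight_nonneg h0 u) (prod_nonneg fun j _ => ?_)
  split_ifs <;> linarith [h1 j]

lemma Δ_prodWeight_antitone (h0 : ∀ j, 0 ≤ a j) (h1 : ∀ j, a j ≤ 1) (u : Finset ℕ) :
    Antitone fun v => Δ v (prodWeight a) u := by
  intro v v' hvv'
  simp only [Δ_prodWeight]
  refine mul_le_mul_of_nonneg_left (prod_anti_set_of_le_one (fun j => ?_) (fun j => ?_) hvv')
    (prodWeight_nonneg h0 u) <;> split_ifs <;> linarith [h0 j, h1 j]

lemma Δ_prodWeight_le_exp (h0 : ∀ j, 0 ≤ a j) (h1 : ∀ j, a j ≤ 1) (v u : Finset ℕ) :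
    Δ v (prodWeight a) u ≤ Real.exp (-∑ j ∈ v, a j) := by
  rw [Δ_prodWeight]
  calc prodWeight a u * ∏ j ∈ v, (1 - if j ∈ u then 1 else a j)
      ≤ 1 * ∏ j ∈ v, (1 - a j) := by
        refine mul_le_mul (prodWeight_le_one h0 h1 u) (prod_le_prod (fun j _ => ?_) fun j _ => ?_)
          (prod_nonneg fun j _ => ?_) zero_le_one <;> split_ifs <;> linarith [h0 j, h1 j]
    _ ≤ Real.exp (-∑ j ∈ v, a j) := by
        rw [one_mul]; exact prod_one_sub_le_exp_neg_sum v fun j _ => h1 j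

lemma tendsto_Δ_prodWeight_range_sdiff_iInf (h0 : ∀ j, 0 ≤ a j) (h1 : ∀ j, a j ≤ 1)
    (v u : Finset ℕ) :
    Tendsto (fun s => Δ (range s \ v) (prodWeight a) u) atTop
      (𝓝 (⨅ s, Δ (range s \ v) (prodWeight a) u)) :=
  tendsto_atTop_ciInf
    ((Δ_prodWeight_antitone h0 h1 u).comp_monotone fun _ _ h => sdiff_subset_sdiff
      (range_subset_range.2 h) le_rfl)
    ⟨0, Set.forall_mem_range.2 fun _ => Δ_prodWeight_nonneg h0 h1 _ u⟩

lemma tendsto_Δ_prodWeight_range_sdiff_zero (h0 : ∀ j, 0 ≤ a j) (h1 : ∀ j, a j ≤ 1)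
    (hs : ¬Summable a) (v u : Finset ℕ) :
    Tendsto (fun s => Δ (range s \ v) (prodWeight a) u) atTop (𝓝 0) := by
  have hpartial : Tendsto (fun s => ∑ j ∈ range s, a j) atTop atTop :=
    (not_summable_iff_tendsto_nat_atTop_of_nonneg h0).1 hs
  have hsum_le (s : ℕ) : ∑ j ∈ range s, a j ≤ ∑ j ∈ range s \ v, a j + ∑ j ∈ v, a j := by
    rw [← sum_union sdiff_disjoint]
    refine sum_le_sum_of_subset_of_nonneg ?_ fun j _ _ => h0 j
    rw [sdiff_union_self_eq_union]
    exact subset_union_left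
  have hsdiff : Tendsto (fun s => ∑ j ∈ range s \ v, a j) atTop atTop :=
    tendsto_atTop_mono (fun s => by linarith [hsum_le s])
      (tendsto_atTop_add_const_right _ (-∑ j ∈ v, a j) hpartial)
  exact tendsto_of_tendsto_of_tendsto_of_le_of_le tendsto_const_nhds
    (Real.tendsto_exp_neg_atTop_nhds_zero.comp hsdiff)
    (fun s => Δ_prodWeight_nonneg h0 h1 _ u) fun s => Δ_prodWeight_le_exp h0 h1 _ u

lemma tendsto_iInf_Δ_prodWeight_range_sdiff_range (h0 : ∀ j, 0 ≤ a j) (h1 : ∀ j, a j ≤ 1)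
    (hs : Summable a) (u : Finset ℕ) :
    Tendsto (fun r => ⨅ s, Δ (range s \ range r) (prodWeight a) u) atTop
      (𝓝 (prodWeight a u)) := by
  have hbdd (r : ℕ) : BddBelow (Set.range fun s => Δ (range s \ range r) (prodWeight a) u) :=
    ⟨0, Set.forall_mem_range.2 fun _ => Δ_prodWeight_nonneg h0 h1 _ u⟩
  have hupper (r : ℕ) : ⨅ s, Δ (range s \ range r) (prodWeight a) u ≤ prodWeight a u :=
    (ciInf_le (hbdd r) 0).trans_eq (by simp [Δ_prodWeight])
  have hlower : ∀ᶠ r in atTop, prodWeight a u * (1 - (∑' j, a j - ∑ j ∈ range r, a j)) ≤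
      ⨅ s, Δ (range s \ range r) (prodWeight a) u := by
    filter_upwards [eventually_gt_atTop (u.sup id)] with r hr
    refine le_ciInf fun s => ?_
    have hF : ∀ j ∈ range s \ range r, r ≤ j := fun j hj => by simpa using (mem_sdiff.1 hj).2
    have hdisj : Disjoint (range s \ range r) u := disjoint_left.2 fun j hj hju =>
      ((le_sup (f := id) hju).trans_lt hr).not_ge (hF j hj)
    rw [Δ_prodWeight_of_disjoint a hdisj]
    exact mul_le_mul_of_nonneg_left (one_sub_tail_le_prod_one_sub hs h0 h1 hF)
      (prodWeight_nonneg h0 u)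
  have hlim : Tendsto (fun r => prodWeight a u * (1 - (∑' j, a j - ∑ j ∈ range r, a j)))
      atTop (𝓝 (prodWeight a u)) := by
    simpa using ((tendsto_tsum_sub_sum_range hs).const_sub 1).const_mul (prodWeight a u)
  exact tendsto_of_tendsto_of_tendsto_of_le_of_le' hlim tendsto_const_nhds hlower
    (Eventually.of_forall hupper)

lemma exists_pos_le_Δ_prodWeight_range_sdiff (h0 : ∀ j, 0 ≤ a j) (h1 : ∀ j, a j ≤ 1)
    (hs : Summable a) : ∃ u : Finset ℕ, ∃ c > 0, ∀ s, c ≤ Δ (range s \ u) (prodWeight a) u := by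
  obtain ⟨N, hN⟩ := ((tendsto_tsum_sub_sum_range hs).eventually_lt_const one_pos).exists
  -- beyond `N` the tail sum is `< 1`; the zeros below `N` are kept out of `u` so that `γ_u > 0`
  let u := (range N).filter (a · ≠ 0)
  have hu : 0 < prodWeight a u := prod_pos fun j hj => (h0 j).lt_of_ne' (mem_filter.1 hj).2
  refine ⟨u, prodWeight a u * (1 - (∑' j, a j - ∑ j ∈ range N, a j)),
    mul_pos hu (sub_pos.2 hN), fun s => ?_⟩
  have hprod : ∏ j ∈ range s \ range N, (1 - a j) = ∏ j ∈ range s \ u, (1 - a j) := by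
    refine prod_subset (sdiff_subset_sdiff le_rfl (filter_subset _ _)) fun j hj hjN => ?_
    obtain ⟨hjs, hju⟩ := mem_sdiff.1 hj
    replace hjN : j < N := by simpa [hjs] using hjN
    have : a j = 0 := by simpa [u, hjN] using hju
    simp [this]
  rw [Δ_prodWeight_of_disjoint a sdiff_disjoint, ← hprod]
  exact mul_le_mul_of_nonneg_left
    (one_sub_tail_le_prod_one_sub hs h0 h1 fun j hj => by simpa using (mem_sdiff.1 hj).2) hu.le

lemma forall_eq_zero_iff_not_summable {C : ℝ} (hC : C ≠ 0) (h0 : ∀ j, 0 ≤ a j)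
    (h1 : ∀ j, a j ≤ 1) {Td : Finset ℕ → ℝ}
    (hTd : ∀ u : Finset ℕ, Tendsto (fun s : ℕ => Δ (range s \ u) (prodWeight a) u) atTop
      (𝓝 (C ^ (2 * u.card) * Td u))) :
    (∀ u, Td u = 0) ↔ ¬Summable a := by
  refine ⟨fun hzero hs => ?_, fun hs u => ?_⟩
  · obtain ⟨u, c, hc, hle⟩ := exists_pos_le_Δ_prodWeight_range_sdiff h0 h1 hs
    have := ge_of_tendsto' (hTd u) hle
    rw [hzero u, mul_zero] at this
    exact hc.not_ge this
  · have := tendsto_nhds_unique (hTd u) (tendsto_Δ_prodWeight_range_sdiff_zero h0 h1 hs u u)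
    exact (mul_eq_zero.1 this).resolve_left (pow_ne_zero _ hC)

lemma iteratedLimit_Δ_prodWeight_iff_summable (h0 : ∀ j, 0 ≤ a j) (h1 : ∀ j, a j ≤ 1) :
    (∀ u : Finset ℕ, ∃ g : ℕ → ℝ,
        (∀ r : ℕ, Tendsto (fun s : ℕ => Δ (range s \ range r) (prodWeight a) u) atTop
          (𝓝 (g r))) ∧
        Tendsto g atTop (𝓝 (prodWeight a u))) ↔ Summable a := by
  refine ⟨fun h => by_contra fun hs => ?_, fun hs u => ?_⟩
  · obtain ⟨g, hg, hlim⟩ := h ∅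
    have hg0 : Tendsto g atTop (𝓝 0) := tendsto_const_nhds.congr fun r =>
      tendsto_nhds_unique (tendsto_Δ_prodWeight_range_sdiff_zero h0 h1 hs _ ∅) (hg r)
    rw [prodWeight, prod_empty] at hlim
    exact one_ne_zero (tendsto_nhds_unique hlim hg0)
  · exact ⟨_, fun r => tendsto_Δ_prodWeight_range_sdiff_iInf h0 h1 _ u,
      tendsto_iInf_Δ_prodWeight_range_sdiff_range h0 h1 hs u⟩

end ProdWeight

theorem stmt14_general (C : ℝ) (hC : 0 < C) (γseq : ℕ → ℝ)
    (hnn : ∀ j, 0 ≤ γseq j) (hle : ∀ j, γseq j ≤ 1)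
    (γ : Finset ℕ → ℝ) (hγ : ∀ u, γ u = ∏ j ∈ u, γseq j) :
    -- γ is completely monotone
    (∀ v u : Finset ℕ, 0 ≤ Δ v γ u) ∧
    -- (a)
    ((∀ ε > (0 : ℝ), ∃ r : ℕ, ∀ u : Finset ℕ, r ≤ u.sup id → γ u < ε) ↔
      Tendsto γseq atTop (𝓝 0)) ∧
    -- (b)
    (∀ Td : Finset ℕ → ℝ,
      (∀ u : Finset ℕ, Tendsto (fun s : ℕ => Δ (Finset.range s \ u) γ u) atTop
        (𝓝 (C ^ (2 * u.card) * Td u))) →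
      ((∀ u, Td u = 0) ↔ ¬ Summable γseq)) ∧
    -- (c)
    ((∀ u : Finset ℕ, ∃ g : ℕ → ℝ,
        (∀ r : ℕ, Tendsto (fun s : ℕ => Δ (Finset.range s \ Finset.range r) γ u) atTop
          (𝓝 (g r))) ∧
        Tendsto g atTop (𝓝 (γ u))) ↔ Summable γseq) ∧
    (Summable γseq ↔ Summable γ) := by
  obtain rfl : γ = prodWeight γseq := funext hγ
  exact ⟨Δ_prodWeight_nonneg hnn hle, forall_exists_prodWeight_lt_iff_tendsto hnn hle,
    fun _ => forall_eq_zero_iff_not_summable hC.ne' hnn hle,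
    iteratedLimit_Δ_prodWeight_iff_summable hnn hle, (summable_prodWeight_iff hnn).symm⟩

theorem stmt14 (C : ℝ) (hC : 0 < C) (γseq : ℕ → ℝ) (hmono : Antitone γseq)
    (hnn : ∀ j, 0 ≤ γseq j) (hle : ∀ j, γseq j ≤ 1)
    (γ : Finset ℕ → ℝ) (hγ : ∀ u, γ u = ∏ j ∈ u, γseq j) :
    -- γ is completely monotone
    (∀ v u : Finset ℕ, 0 ≤ Δ v γ u) ∧
    -- (a)
    ((∀ ε > (0 : ℝ), ∃ r : ℕ, ∀ u : Finset ℕ, r ≤ u.sup id → γ u < ε) ↔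
      Tendsto γseq atTop (𝓝 0)) ∧
    -- (b)
    (∀ Td : Finset ℕ → ℝ,
      (∀ u : Finset ℕ, Tendsto (fun s : ℕ => Δ (Finset.range s \ u) γ u) atTop
        (𝓝 (C ^ (2 * u.card) * Td u))) →
      ((∀ u, Td u = 0) ↔ ¬ Summable γseq)) ∧
    -- (c)
    ((∀ u : Finset ℕ, ∃ g : ℕ → ℝ,
        (∀ r : ℕ, Tendsto (fun s : ℕ => Δ (Finset.range s \ Finset.range r) γ u) atTop
          (𝓝 (g r))) ∧
        Tendsto g atTop (𝓝 (γ u))) ↔ Summable γseq) ∧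
    (Summable γseq ↔ Summable γ) :=
  stmt14_general C hC γseq hnn hle γ hγ
end

section
/- Let C > 0. (i) For product weights γ_u = Π_{j ∈ u} γ_j with (γ_j) non-increasing and non-negative, one has Σ_{u ∈ 𝒰} C^{2|u|} γ_u < ∞ if and only if Σ_{j ∈ ℕ} γ_j < ∞. (ii) For POD weights γ_u = Γ_{|u|} Π_{j ∈ u} γ_j with (γ_j) non-increasing and non-negative, Γ_k ≤ C_a (k!)^a for constants a, C_a > 0, and p := sup{τ > 0 : Σ_j γ_j^{1/τ} < ∞} (sup ∅ := 0): if p > a and Γ_1 > 0, then Σ_{u ∈ 𝒰} C^{2|u|} γ_u < ∞ if and only if Σ_{j ∈ ℕ} γ_j < ∞; and if p = a ≥ 1 and Σ_{j ∈ ℕ} (C² γ_j)^{1/p} < 1, then Σ_{u ∈ 𝒰} C^{2|u|} γ_u < ∞. (iii) For finite-order weights γ (i.e., γ : 𝒰 → [0,∞) with γ_u = 0 whenever |u| > ω, for some ω ∈ ℕ), Σ_{u ∈ 𝒰} C^{2|u|} γ_u < ∞ if and only if Σ_{u ∈ 𝒰} γ_u < ∞. -/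
/-!
Everything rests on the bound `k! e_k(c) ≤ (∑ c)^k` for the elementary symmetric sums of a
non-negative family: the products `∏_{j ∈ u} c_j` over all `u` with `|u| = k` add up to at most
`(∑ c)^k / k!`. For POD weights `Γ_k ≤ C_a (k!)^a` choose `τ ≥ 1` with `a < τ` and
`∑ γ_j^{1/τ} < ∞`; the weight of `u` is then at most `C_a` times the `τ`-th power of
`(|u|!)^{a/τ} ∏_{j ∈ u} (C²γ_j)^{1/τ}`, whose sum over `u` is at most `∑_k (k!)^{a/τ - 1} S^k`,
finite because `a/τ < 1` (or, when `τ = a`, because `S < 1`). Summability of the weights forces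
that of `γ` already on singletons, and finite-order weights only meet the bounded factors
`C^{2|u|}` with `|u| ≤ ω`.
-/

open Finset

/-- The decay of a family of non-negative reals:
`decay(a) := sup {τ > 0 : Σ_v a_v^{1/τ} < ∞}` (with `sup ∅ := 0`),
taking values in `[0, ∞]`. -/
noncomputable def decay {V : Type*} (f : V → ℝ) : ENNReal :=
  ⨆ (t : ℝ) (_ : 0 < t ∧ Summable fun v => f v ^ (1 / t)), ENNReal.ofReal t

open scoped Nat

namespace Multiset

variable {R : Type*} [CommSemiring R]

theorem esymm_cons_succ (a : R) (s : Multiset R) (n : ℕ) :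
    (a ::ₘ s).esymm (n + 1) = s.esymm (n + 1) + a * s.esymm n := by
  simp [esymm, powersetCard_cons, map_map, sum_map_mul_left]

theorem factorial_mul_esymm_le_sum_pow [LinearOrder R] [IsOrderedRing R] [ExistsAddOfLE R]
    (s : Multiset R) (hs : ∀ x ∈ s, 0 ≤ x) (k : ℕ) : (k ! : R) * s.esymm k ≤ s.sum ^ k := by
  induction s using Multiset.induction_on generalizing k with
  | empty => cases k <;> simp [esymm, powersetCard_zero_right]
  | cons a s ih =>
    have ha : 0 ≤ a := hs a (mem_cons_self a s)
    have hs' : ∀ x ∈ s, 0 ≤ x := fun x hx => hs x (mem_cons_of_mem hx)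
    have hS : 0 ≤ s.sum := sum_nonneg hs'
    cases k with
    | zero => simp [esymm]
    | succ m =>
      calc ((m + 1)! : R) * (a ::ₘ s).esymm (m + 1)
          = (m + 1)! * s.esymm (m + 1) + (m + 1) * a * (m ! * s.esymm m) := by
            rw [esymm_cons_succ, Nat.factorial_succ]; push_cast; ring
        _ ≤ s.sum ^ (m + 1) + (m + 1) * a * s.sum ^ m := by
            have hma : (0 : R) ≤ (m + 1) * a :=
              mul_nonneg (add_nonneg (Nat.cast_nonneg m) zero_le_one) ha
            exact add_le_add (ih hs' _) (mul_le_mul_of_nonneg_left (ih hs' _) hma)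
        _ ≤ (s.sum + a) ^ (m + 1) := by
            have := pow_add_mul_le_add_pow hS (add_nonneg (mul_nonneg zero_le_two hS) ha) (m + 1)
            push_cast at this
            simpa [mul_comm, mul_left_comm, mul_assoc] using this
        _ = (a ::ₘ s).sum ^ (m + 1) := by rw [sum_cons, add_comm]

end Multiset

theorem Finset.factorial_mul_sum_powersetCard_prod_le {ι R : Type*} [CommSemiring R]
    [LinearOrder R] [IsOrderedRing R] [ExistsAddOfLE R] (s : Finset ι) {c : ι → R}
    (hc : ∀ i ∈ s, 0 ≤ c i) (k : ℕ) :
    (k ! : R) * ∑ u ∈ s.powersetCard k, ∏ i ∈ u, c i ≤ (∑ i ∈ s, c i) ^ k := by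
  rw [← Finset.esymm_map_val, Finset.sum_eq_multiset_sum]
  exact (s.val.map c).factorial_mul_esymm_le_sum_pow (by simpa using hc) k

theorem summable_rpow_of_one_le {ι : Type*} {x : ι → ℝ} (hx : ∀ i, 0 ≤ x i) (hs : Summable x)
    {τ : ℝ} (hτ : 1 ≤ τ) : Summable fun i => x i ^ τ := by
  refine hs.of_norm_bounded_eventually ?_
  filter_upwards [hs.tendsto_cofinite_zero.eventually (Iic_mem_nhds one_pos)] with i hi
  rw [Real.norm_of_nonneg (Real.rpow_nonneg (hx i) τ)]
  exact Real.rpow_le_self_of_le_one (hx i) hi hτ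

theorem summable_factorial_rpow_sub_one_mul_pow {β : ℝ} (hβ : β < 1) (S : ℝ) :
    Summable fun k : ℕ => (k ! : ℝ) ^ (β - 1) * S ^ k := by
  have hratio : Filter.Tendsto (fun k : ℕ => ((k + 1 : ℕ) : ℝ) ^ (β - 1) * ‖S‖)
      Filter.atTop (nhds 0) := by
    have := (tendsto_rpow_neg_atTop (by linarith : 0 < 1 - β)).comp
      (tendsto_natCast_atTop_atTop.comp (Filter.tendsto_add_atTop_nat 1))
    simpa using this.mul_const ‖S‖
  refine summable_of_ratio_norm_eventually_le (r := 1 / 2) (by norm_num) ?_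
  filter_upwards [hratio.eventually (Iic_mem_nhds (by norm_num : (0 : ℝ) < 1 / 2))] with k hk
  have hfac : ((k + 1)! : ℝ) ^ (β - 1) = ((k + 1 : ℕ) : ℝ) ^ (β - 1) * (k ! : ℝ) ^ (β - 1) := by
    rw [Nat.factorial_succ, Nat.cast_mul, Real.mul_rpow (Nat.cast_nonneg _) (Nat.cast_nonneg _)]
  calc ‖((k + 1)! : ℝ) ^ (β - 1) * S ^ (k + 1)‖
      = (((k + 1 : ℕ) : ℝ) ^ (β - 1) * ‖S‖) * ‖(k ! : ℝ) ^ (β - 1) * S ^ k‖ := by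
        rw [hfac, norm_mul, norm_mul, norm_mul, norm_pow, norm_pow, pow_succ,
          Real.norm_of_nonneg (Real.rpow_nonneg (Nat.cast_nonneg _) _),
          Real.norm_of_nonneg (Real.rpow_nonneg (Nat.cast_nonneg _) _)]
        ring
    _ ≤ 1 / 2 * ‖(k ! : ℝ) ^ (β - 1) * S ^ k‖ := by gcongr

theorem summable_factorial_rpow_mul_prod {ι : Type*} {c : ι → ℝ} (hc : ∀ i, 0 ≤ c i)
    (hs : Summable c) {β : ℝ}
    (hg : Summable fun k : ℕ => (k ! : ℝ) ^ (β - 1) * (∑' i, c i) ^ k) :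
    Summable fun u : Finset ι => (u.card ! : ℝ) ^ β * ∏ i ∈ u, c i := by
  classical
  have hnonneg : ∀ u : Finset ι, 0 ≤ (u.card ! : ℝ) ^ β * ∏ i ∈ u, c i := fun u =>
    mul_nonneg (Real.rpow_nonneg (Nat.cast_nonneg _) _) (prod_nonneg fun i _ => hc i)
  refine summable_of_sum_le (c := ∑' k, (k ! : ℝ) ^ (β - 1) * (∑' i, c i) ^ k) hnonneg
    fun F => ?_
  set s := F.sup id
  have hlayer : ∀ k, (k ! : ℝ) ^ β * ∑ u ∈ s.powersetCard k, ∏ i ∈ u, c i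
      ≤ (k ! : ℝ) ^ (β - 1) * (∑' i, c i) ^ k := by
    intro k
    have hk : (0 : ℝ) < k ! := by exact_mod_cast k.factorial_pos
    calc (k ! : ℝ) ^ β * ∑ u ∈ s.powersetCard k, ∏ i ∈ u, c i
        = (k ! : ℝ) ^ (β - 1) * (k ! * ∑ u ∈ s.powersetCard k, ∏ i ∈ u, c i) := by
          rw [Real.rpow_sub_one hk.ne']; field_simp
      _ ≤ (k ! : ℝ) ^ (β - 1) * (∑ i ∈ s, c i) ^ k := by
          gcongr
          exact s.factorial_mul_sum_powersetCard_prod_le (fun i _ => hc i) k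
      _ ≤ (k ! : ℝ) ^ (β - 1) * (∑' i, c i) ^ k := by
          gcongr
          · exact sum_nonneg fun i _ => hc i
          · exact hs.sum_le_tsum s fun i _ => hc i
  calc ∑ u ∈ F, (u.card ! : ℝ) ^ β * ∏ i ∈ u, c i
      ≤ ∑ u ∈ s.powerset, (u.card ! : ℝ) ^ β * ∏ i ∈ u, c i :=
        sum_le_sum_of_subset_of_nonneg (fun u hu => mem_powerset.2 (le_sup (f := id) hu))
          fun u _ _ => hnonneg u
    _ = ∑ k ∈ range (s.card + 1), (k ! : ℝ) ^ β * ∑ u ∈ s.powersetCard k, ∏ i ∈ u, c i := by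
        rw [sum_powerset]
        refine sum_congr rfl fun k _ => ?_
        rw [mul_sum]
        exact sum_congr rfl fun u hu => by rw [(mem_powersetCard.1 hu).2]
    _ ≤ ∑ k ∈ range (s.card + 1), (k ! : ℝ) ^ (β - 1) * (∑' i, c i) ^ k :=
        sum_le_sum fun k _ => hlayer k
    _ ≤ ∑' k, (k ! : ℝ) ^ (β - 1) * (∑' i, c i) ^ k :=
        hg.sum_le_tsum _ fun k _ =>
          mul_nonneg (Real.rpow_nonneg (Nat.cast_nonneg _) _) (pow_nonneg (tsum_nonneg hc) _)

theorem summable_mul_prod_of_le_factorial_rpow {ι : Type*} {c : ι → ℝ} (hc : ∀ i, 0 ≤ c i)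
    {Γ : ℕ → ℝ} (hΓ : ∀ k, 0 ≤ Γ k) {a Ca τ : ℝ} (hΓle : ∀ k, Γ k ≤ Ca * (k ! : ℝ) ^ a)
    (hτ : 1 ≤ τ) (hs : Summable fun i => c i ^ (1 / τ))
    (hg : Summable fun k : ℕ => (k ! : ℝ) ^ (a / τ - 1) * (∑' i, c i ^ (1 / τ)) ^ k) :
    Summable fun u : Finset ι => Γ u.card * ∏ i ∈ u, c i := by
  have hτ0 : τ ≠ 0 := by positivity
  set x : Finset ι → ℝ := fun u => (u.card ! : ℝ) ^ (a / τ) * ∏ i ∈ u, c i ^ (1 / τ)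
  have hx0 : ∀ u, 0 ≤ x u := fun u =>
    mul_nonneg (Real.rpow_nonneg (Nat.cast_nonneg _) _)
      (prod_nonneg fun i _ => Real.rpow_nonneg (hc i) _)
  have hxτ : ∀ u, x u ^ τ = (u.card ! : ℝ) ^ a * ∏ i ∈ u, c i := fun u => by
    rw [Real.mul_rpow (Real.rpow_nonneg (Nat.cast_nonneg _) _)
        (prod_nonneg fun i _ => Real.rpow_nonneg (hc i) _),
      ← Real.rpow_mul (Nat.cast_nonneg _), div_mul_cancel₀ a hτ0,
      ← Real.finsetProd_rpow _ _ (fun i _ => Real.rpow_nonneg (hc i) _)]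
    congr 1
    refine prod_congr rfl fun i _ => ?_
    rw [← Real.rpow_mul (hc i), one_div_mul_cancel hτ0, Real.rpow_one]
  have hx : Summable x :=
    summable_factorial_rpow_mul_prod (fun i => Real.rpow_nonneg (hc i) _) hs hg
  refine .of_nonneg_of_le (fun u => mul_nonneg (hΓ _) (prod_nonneg fun i _ => hc i)) (fun u => ?_)
    ((summable_rpow_of_one_le hx0 hx hτ).mul_left Ca)
  rw [hxτ, ← mul_assoc]
  exact mul_le_mul_of_nonneg_right (hΓle _) (prod_nonneg fun i _ => hc i)

theorem exists_summable_rpow_of_ofReal_lt_decay {V : Type*} {f : V → ℝ} {a : ℝ}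
    (h : ENNReal.ofReal a < decay f) (hf : Summable f) :
    ∃ τ, 1 ≤ τ ∧ a < τ ∧ Summable fun v => f v ^ (1 / τ) := by
  obtain ⟨t, ht⟩ := lt_iSup_iff.1 h
  obtain ⟨⟨ht0, hft⟩, hat⟩ := lt_iSup_iff.1 ht
  have hat : a < t := (ENNReal.ofReal_lt_ofReal_iff ht0).1 hat
  rcases le_total 1 t with h1 | h1
  · exact ⟨t, h1, hat, hft⟩
  · exact ⟨1, le_rfl, hat.trans_le h1, by simpa using hf⟩

theorem summable_of_summable_mul_prod {ι : Type*} {w : ℕ → ℝ} {γ : ι → ℝ}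
    (h : Summable fun u : Finset ι => w u.card * ∏ i ∈ u, γ i) (hw : w 1 ≠ 0) : Summable γ :=
  (summable_mul_left_iff hw).1 <| (h.comp_injective singleton_injective).congr fun i => by simp

theorem summable_pow_card_mul_iff {ι : Type*} {f : Finset ι → ℝ} {x : ℝ} (hx : x ≠ 0) {ω : ℕ}
    (hω : ∀ u : Finset ι, ω < u.card → f u = 0) :
    (Summable fun u => x ^ u.card * f u) ↔ Summable f := by
  have key : ∀ {y : ℝ} {g : Finset ι → ℝ}, (∀ u : Finset ι, ω < u.card → g u = 0) →
      Summable g → Summable fun u => y ^ u.card * g u := fun {y g} hg hs => by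
    refine hs.norm.mul_left (max 1 ‖y‖ ^ ω) |>.of_norm_bounded fun u => ?_
    by_cases hu : ω < u.card
    · simp [hg u hu]
    rw [norm_mul, norm_pow]
    gcongr
    exact (pow_le_pow_left₀ (norm_nonneg y) (le_max_right 1 _) _).trans
      (pow_le_pow_right₀ (le_max_left 1 _) (not_lt.1 hu))
  refine ⟨fun h => ?_, key hω⟩
  refine (key (y := x⁻¹) (fun u hu => by simp [hω u hu]) h).congr fun u => ?_
  rw [← mul_assoc, ← mul_pow, inv_mul_cancel₀ hx, one_pow, one_mul]

theorem pow_two_mul_card_mul_prod {ι : Type*} (C : ℝ) (γ : ι → ℝ) (u : Finset ι) :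
    C ^ (2 * u.card) * ∏ i ∈ u, γ i = ∏ i ∈ u, C ^ 2 * γ i := by
  rw [prod_mul_distrib, prod_const, pow_mul]

theorem summable_prod_iff {ι : Type*} {c : ι → ℝ} (hc : ∀ i, 0 ≤ c i) :
    (Summable fun u : Finset ι => ∏ i ∈ u, c i) ↔ Summable c := by
  refine ⟨fun h => summable_of_summable_mul_prod (w := 1) (by simpa using h) one_ne_zero,
    fun h => ?_⟩
  simpa using summable_factorial_rpow_mul_prod hc h
    (summable_factorial_rpow_sub_one_mul_pow zero_lt_one _)

theorem stmt15 (C : ℝ) (hC : 0 < C) :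
    -- (i) product weights
    (∀ γseq : ℕ → ℝ, Antitone γseq → (∀ j, 0 ≤ γseq j) →
      ((Summable fun u : Finset ℕ => C ^ (2 * u.card) * ∏ j ∈ u, γseq j) ↔
        Summable γseq)) ∧
    -- (ii) POD weights
    (∀ (γseq : ℕ → ℝ) (Γ : ℕ → ℝ) (a Ca : ℝ), Antitone γseq → (∀ j, 0 ≤ γseq j) →
      (∀ k, 0 ≤ Γ k) → 0 < a → 0 < Ca →
      (∀ k : ℕ, Γ k ≤ Ca * (k.factorial : ℝ) ^ a) →
      ((ENNReal.ofReal a < decay γseq → 0 < Γ 1 →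
        ((Summable fun u : Finset ℕ => C ^ (2 * u.card) * (Γ u.card * ∏ j ∈ u, γseq j)) ↔
          Summable γseq)) ∧
       (decay γseq = ENNReal.ofReal a → 1 ≤ a →
        (Summable fun j : ℕ => (C ^ 2 * γseq j) ^ (1 / a)) →
        (∑' j : ℕ, (C ^ 2 * γseq j) ^ (1 / a)) < 1 →
        Summable fun u : Finset ℕ => C ^ (2 * u.card) * (Γ u.card * ∏ j ∈ u, γseq j)))) ∧
    -- (iii) finite-order weights
    (∀ (γ : Finset ℕ → ℝ) (ω : ℕ), 0 < ω → (∀ u, 0 ≤ γ u) →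
      (∀ u : Finset ℕ, ω < u.card → γ u = 0) →
      ((Summable fun u : Finset ℕ => C ^ (2 * u.card) * γ u) ↔ Summable γ)) := by
  have hC2 : 0 < C ^ 2 := by positivity
  have hc : ∀ γ : ℕ → ℝ, (∀ j, 0 ≤ γ j) → ∀ j, 0 ≤ C ^ 2 * γ j := fun γ hγ j =>
    mul_nonneg hC2.le (hγ j)
  have hweight : ∀ (γ Γ : ℕ → ℝ) (u : Finset ℕ),
      C ^ (2 * u.card) * (Γ u.card * ∏ j ∈ u, γ j) = Γ u.card * ∏ j ∈ u, C ^ 2 * γ j := by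
    intros; rw [mul_left_comm, pow_two_mul_card_mul_prod]
  refine ⟨fun γ _ hγ => ?_, fun γ Γ a Ca _ hγ hΓ _ _ hΓle =>
    ⟨fun hdec hΓ1 => ⟨fun h => ?_, fun h => ?_⟩, fun _ ha hs hlt => ?_⟩, fun γ ω _ _ hω => ?_⟩
  · simp_rw [pow_two_mul_card_mul_prod, summable_prod_iff (hc γ hγ)]
    exact summable_mul_left_iff hC2.ne'
  · exact summable_of_summable_mul_prod (w := fun k => C ^ (2 * k) * Γ k)
      (by simpa only [mul_assoc] using h) (by positivity)
  · obtain ⟨τ, hτ, haτ, hsτ⟩ := exists_summable_rpow_of_ofReal_lt_decay hdec h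
    have hs : Summable fun j => (C ^ 2 * γ j) ^ (1 / τ) := by
      simpa only [Real.mul_rpow hC2.le (hγ _)] using hsτ.mul_left ((C ^ 2) ^ (1 / τ))
    simpa only [hweight] using summable_mul_prod_of_le_factorial_rpow (hc γ hγ) hΓ hΓle hτ hs
      (summable_factorial_rpow_sub_one_mul_pow ((div_lt_one (zero_lt_one.trans_le hτ)).2 haτ) _)
  · have hg := summable_geometric_of_lt_one
      (tsum_nonneg fun j => Real.rpow_nonneg (hc γ hγ j) (1 / a)) hlt
    simpa only [hweight] using summable_mul_prod_of_le_factorial_rpow (hc γ hγ) hΓ hΓle ha hs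
      (by simpa [div_self (by positivity : a ≠ 0)] using hg)
  · simpa only [pow_mul] using summable_pow_card_mul_iff (pow_ne_zero 2 hC.ne') hω
end
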